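/- Let Ω be a commutative monoid acting on the vertex decoration set V, and define σ ▷^{a,ω} τ := Σ_{v ∈ N_τ} ↑_v^ω (σ ▷ᵃ_v τ), where ↑_v^ω multiplies the decoration of v by ω. Then the family (▷^{a,ω})_{(a,ω) ∈ E×Ω} makes the span of decorated rooted trees an (E×Ω)-multi-pre-Lie algebra. -/

import Mathlib

/-- Planar rooted trees with vertex decorations in `V` and edge decorations in `E`. -/
inductive RT (V E : Type) : Type where
  | node : V → List (E × RT V E) → RT V E

/-- One-step reordering of children (at the root or at a deeper vertex). -/
inductive Swap {V E : Type} : RT V E → RT V E → Prop where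
  | here (v : V) (l₁ l₂ : List (E × RT V E)) (p q : E × RT V E) :
      Swap (.node v (l₁ ++ p :: q :: l₂)) (.node v (l₁ ++ q :: p :: l₂))
  | child (v : V) (l₁ l₂ : List (E × RT V E)) (e : E) {t t' : RT V E} :
      Swap t t' → Swap (.node v (l₁ ++ (e, t) :: l₂)) (.node v (l₁ ++ (e, t') :: l₂))

/-- (Non-planar) decorated rooted trees: planar trees modulo reordering of children. -/
def QT (V E : Type) : Type := Quot (@Swap V E)

/-- The linear span of decorated rooted trees, with rational coefficients. -/
abbrev Span (V E : Type) : Type := QT V E →₀ ℚ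

def qt {V E : Type} (t : RT V E) : QT V E := Quot.mk _ t

/-- A tree, as a basis vector of the span. -/
noncomputable def bas {V E : Type} (t : RT V E) : Span V E := Finsupp.single (qt t) 1

/-- The element of the span given by a list of trees (sum with multiplicity). -/
noncomputable def ofList {V E : Type} (l : List (RT V E)) : Span V E := (l.map bas).sum

/-- Formal rational combination of planar trees, as an element of the span. -/
noncomputable def combo {V E : Type} (l : List (ℚ × RT V E)) : Span V E :=
  (l.map fun p => p.1 • bas p.2).sum

mutual
/-- List of the graftings of `σ` on each vertex of a tree, via a new `a`-edge. -/
def graftT {V E : Type} (a : E) (σ : RT V E) : RT V E → List (RT V E)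
  | .node v l => .node v ((a, σ) :: l) :: (graftL a σ l).map (.node v)
/-- Auxiliary: graftings of `σ` inside one of the listed subtrees. -/
def graftL {V E : Type} (a : E) (σ : RT V E) :
    List (E × RT V E) → List (List (E × RT V E))
  | [] => []
  | (e, t) :: r =>
      ((graftT a σ t).map fun t' => (e, t') :: r)
        ++ ((graftL a σ r).map fun r' => (e, t) :: r')
end

mutual
/-- Graftings of `σ` on each vertex of a tree via a new `a`-edge, additionally acting by
`act ω` on the decoration of the target vertex: the summands of `σ ▷^{a,ω} τ`. -/
def graftMT {V E Ω : Type} (act : Ω → V → V) (a : E) (ω : Ω) (σ : RT V E) :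
    RT V E → List (RT V E)
  | .node v l => .node (act ω v) ((a, σ) :: l) :: (graftML act a ω σ l).map (.node v)
/-- Auxiliary: graftings of `σ` inside one of the listed subtrees. -/
def graftML {V E Ω : Type} (act : Ω → V → V) (a : E) (ω : Ω) (σ : RT V E) :
    List (E × RT V E) → List (List (E × RT V E))
  | [] => []
  | (e, t) :: r =>
      ((graftMT act a ω σ t).map fun t' => (e, t') :: r)
        ++ ((graftML act a ω σ r).map fun r' => (e, t) :: r')
end

/-!
Both sides are linear in `x`, `y` and `z`, so it suffices to compare
`σ ▷ᵖ (τ ▷^q υ) + (τ ▷^q σ) ▷ᵖ υ` with `τ ▷^q (σ ▷ᵖ υ) + (σ ▷ᵖ τ) ▷^q υ` on trees.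
Grafting `σ` onto a vertex of `τ ▷^q υ` either lands in `τ`, which gives the trees of
`(σ ▷ᵖ τ) ▷^q υ`, or in `υ`; symmetrically on the other side. What is left on both sides are
the trees with `σ` and `τ` both grafted onto `υ`: at distinct vertices the order of grafting
does not matter, and at a common vertex the two trees differ only by the order of the two new
children and of the two actions on its decoration, which commute. Since trees are planar
representatives, the induction on `υ` compares lists of children through the multisets of
their classes.
-/

theorem Multiset.map_eq_map_of_map_eq {α β γ : Type*} {f : α → β} {g : α → γ}
    {s t : Multiset α} (hst : s.map f = t.map f) (h : ∀ x y, f x = f y → g x = g y) :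
    s.map g = t.map g := by
  rw [← Multiset.rel_eq, Multiset.rel_map] at hst ⊢
  exact hst.mono fun x _ y _ hxy => h x y hxy

section Classes

variable {V E : Type}

theorem qt_node_perm {l₁ l₂ : List (E × RT V E)} (h : l₁.Perm l₂) (v : V)
    (c : List (E × RT V E)) : qt (.node v (c ++ l₁)) = qt (.node v (c ++ l₂)) := by
  induction h generalizing c with
  | nil => rfl
  | cons p _ ih => simpa using ih (c ++ [p])
  | swap p q l => exact Quot.sound (Swap.here v c l q p)
  | trans _ _ ih₁ ih₂ => exact (ih₁ c).trans (ih₂ c)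

theorem qt_node_congr_child {t t' : RT V E} (h : qt t = qt t') (v : V)
    (c r : List (E × RT V E)) (e : E) :
    qt (.node v (c ++ (e, t) :: r)) = qt (.node v (c ++ (e, t') :: r)) :=
  congrArg (Quot.lift (fun t => qt (.node v (c ++ (e, t) :: r)))
    fun _ _ h => Quot.sound (Swap.child v c r e h)) h

theorem qt_node_congr {l₁ l₂ : List (E × RT V E)}
    (h : l₁.map (Prod.map id qt) = l₂.map (Prod.map id qt)) (v : V) (c : List (E × RT V E)) :
    qt (.node v (c ++ l₁)) = qt (.node v (c ++ l₂)) := by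
  induction l₁ generalizing l₂ c with
  | nil => rw [List.eq_nil_of_map_eq_nil h.symm]
  | cons p r ih =>
    obtain ⟨e, t⟩ := p
    cases l₂ with
    | nil => simp at h
    | cons p' r' =>
      obtain ⟨e', t'⟩ := p'
      simp only [List.map_cons, List.cons.injEq, Prod.map, id, Prod.mk.injEq] at h
      obtain ⟨⟨rfl, ht⟩, hr⟩ := h
      calc qt (.node v (c ++ (e, t) :: r))
          = qt (.node v ((c ++ [(e, t')]) ++ r)) := by
            simpa using qt_node_congr_child ht v c r e
        _ = qt (.node v ((c ++ [(e, t')]) ++ r')) := ih hr _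
        _ = qt (.node v (c ++ (e, t') :: r')) := by simp

def childClasses (l : List (E × RT V E)) : Multiset (E × QT V E) :=
  (l : Multiset (E × RT V E)).map (Prod.map id qt)

@[simp]
theorem childClasses_cons (p : E × RT V E) (l : List (E × RT V E)) :
    childClasses (p :: l) = (p.1, qt p.2) ::ₘ childClasses l := by
  simp [childClasses, ← Multiset.cons_coe, Prod.map]

theorem qt_node_eq_of_childClasses_eq {l₁ l₂ : List (E × RT V E)}
    (h : childClasses l₁ = childClasses l₂) (v : V) : qt (.node v l₁) = qt (.node v l₂) := by
  have hperm : (l₁.map (Prod.map id qt)).Perm (l₂.map (Prod.map id qt)) :=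
    Multiset.coe_eq_coe.mp (by simpa [childClasses] using h)
  obtain ⟨l', hmap, hl'⟩ := (iff_of_eq (congrFun₂ (List.eq_map_comp_perm _) _ _)).mpr hperm
  exact (qt_node_congr hmap v []).trans (qt_node_perm hl' v [])

end Classes

section Grafting

variable {V E Ω : Type} (act : Ω → V → V)

def grafts (p : E × Ω) (σ τ : RT V E) : Multiset (RT V E) :=
  graftMT act p.1 p.2 σ τ

def childGrafts (p : E × Ω) (σ : RT V E) (l : List (E × RT V E)) :
    Multiset (List (E × RT V E)) :=
  graftML act p.1 p.2 σ l

theorem grafts_node (p : E × Ω) (σ : RT V E) (v : V) (l : List (E × RT V E)) :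
    grafts act p σ (.node v l)
      = .node (act p.2 v) ((p.1, σ) :: l) ::ₘ (childGrafts act p σ l).map (.node v) := by
  simp [grafts, childGrafts, graftMT]

theorem childGrafts_nil (p : E × Ω) (σ : RT V E) : childGrafts act p σ [] = 0 := rfl

theorem childGrafts_cons (p : E × Ω) (σ : RT V E) (e : E) (t : RT V E)
    (r : List (E × RT V E)) :
    childGrafts act p σ ((e, t) :: r)
      = (grafts act p σ t).map (fun t' => (e, t') :: r)
        + (childGrafts act p σ r).map (fun r' => (e, t) :: r') := by
  simp [grafts, childGrafts, graftML]

/-- The trees of `σ ▷ᵖ (τ ▷^q υ) + (τ ▷^q σ) ▷ᵖ υ`, with multiplicities. -/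
def preLieTerms (p q : E × Ω) (σ τ υ : RT V E) : Multiset (RT V E) :=
  (grafts act q τ υ).bind (grafts act p σ) + (grafts act q τ σ).bind (grafts act p · υ)

def childPreLieTerms (p q : E × Ω) (σ τ : RT V E) (l : List (E × RT V E)) :
    Multiset (List (E × RT V E)) :=
  (childGrafts act q τ l).bind (childGrafts act p σ)
    + (grafts act q τ σ).bind (childGrafts act p · l)

variable {act} {p q : E × Ω}

mutual

theorem map_qt_preLieTerms_comm (hc : Function.Commute (act p.2) (act q.2)) (σ τ : RT V E) :
    ∀ υ : RT V E, (preLieTerms act p q σ τ υ).map qt = (preLieTerms act q p τ σ υ).map qt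
  | .node v l => by
    have IH := Multiset.map_eq_map_of_map_eq (map_childClasses_childPreLieTerms_comm hc σ τ l)
      (g := fun l' => qt (.node v l')) fun _ _ h => qt_node_eq_of_childClasses_eq h v
    have hroot : qt (.node (act p.2 (act q.2 v)) ((p.1, σ) :: (q.1, τ) :: l))
        = qt (.node (act q.2 (act p.2 v)) ((q.1, τ) :: (p.1, σ) :: l)) := by
      rw [hc v]
      exact Quot.sound (Swap.here _ [] l _ _)
    simp only [preLieTerms, childPreLieTerms, grafts_node, childGrafts_cons, Multiset.cons_bind,
      Multiset.bind_map, Multiset.map_bind, Multiset.bind_cons, Multiset.map_add,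
      Multiset.map_cons, Multiset.map_map, Function.comp_def] at IH ⊢
    rw [hroot]
    -- the remaining summands match pairwise, up to the two families equated by `IH`
    classical
    ext x
    have IHx := congrArg (Multiset.count x) IH
    simp only [Multiset.count_add, Multiset.count_cons] at IHx ⊢
    omega

theorem map_childClasses_childPreLieTerms_comm (hc : Function.Commute (act p.2) (act q.2))
    (σ τ : RT V E) : ∀ l : List (E × RT V E),
    (childPreLieTerms act p q σ τ l).map childClasses
      = (childPreLieTerms act q p τ σ l).map childClasses
  | [] => by simp [childPreLieTerms, childGrafts_nil]
  | (e, t) :: r => by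
    have IHt := Multiset.map_eq_map_of_map_eq (map_qt_preLieTerms_comm hc σ τ t)
      (g := fun t' => childClasses ((e, t') :: r)) fun _ _ h => by simp [h]
    have IHr := Multiset.map_eq_map_of_map_eq (map_childClasses_childPreLieTerms_comm hc σ τ r)
      (g := fun r' => childClasses ((e, t) :: r')) fun _ _ h => by simp [h]
    simp only [preLieTerms, childPreLieTerms, childGrafts_cons, Multiset.bind_map,
      Multiset.map_bind, Multiset.add_bind, Multiset.bind_add, Multiset.map_add,
      Multiset.map_map, Function.comp_def] at IHt IHr ⊢
    -- grafting one tree into `t` and the other into `r` can be done in either order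
    rw [Multiset.bind_map_comm (grafts act q τ t), Multiset.bind_map_comm (grafts act p σ t)]
    classical
    ext x
    have IHtx := congrArg (Multiset.count x) IHt
    have IHrx := congrArg (Multiset.count x) IHr
    simp only [Multiset.count_add] at IHtx IHrx ⊢
    omega

end

end Grafting

section Associator

variable {R A : Type*} [CommSemiring R] [AddCommGroup A] [Module R A]

def LinearMap.associator (f h : A →ₗ[R] A →ₗ[R] A) : A →ₗ[R] A →ₗ[R] A →ₗ[R] A :=
  (LinearMap.llcomp R A A A ∘ₗ f).compl₂ h - LinearMap.llcomp R A A (A →ₗ[R] A) h ∘ₗ f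

@[simp]
theorem LinearMap.associator_apply (f h : A →ₗ[R] A →ₗ[R] A) (x y z : A) :
    associator f h x y z = f x (h y z) - h (f x y) z := rfl

end Associator

namespace Span

variable {V E : Type}

noncomputable def ofMultiset (m : Multiset (RT V E)) : Span V E := (m.map bas).sum

theorem ofList_eq_ofMultiset (l : List (RT V E)) : ofList l = ofMultiset (l : Multiset _) := by
  simp [ofList, ofMultiset]

theorem ofMultiset_add (m m' : Multiset (RT V E)) :
    ofMultiset (m + m') = ofMultiset m + ofMultiset m' := by
  simp [ofMultiset]

theorem ofMultiset_congr {m m' : Multiset (RT V E)} (h : m.map qt = m'.map qt) :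
    ofMultiset m = ofMultiset m' := by
  have hbas (s : Multiset (RT V E)) : s.map bas = (s.map qt).map (Finsupp.single · 1) := by
    rw [Multiset.map_map]; rfl
  rw [ofMultiset, ofMultiset, hbas, hbas, h]

theorem map_ofMultiset {M : Type*} [AddCommMonoid M] [Module ℚ M] (φ : Span V E →ₗ[ℚ] M)
    (m : Multiset (RT V E)) : φ (ofMultiset m) = (m.map (φ ∘ bas)).sum := by
  rw [ofMultiset, map_multiset_sum, Multiset.map_map]

theorem ofMultiset_bind (m : Multiset (RT V E)) (f : RT V E → Multiset (RT V E)) :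
    ofMultiset (m.bind f) = (m.map (ofMultiset ∘ f)).sum := by
  simp [ofMultiset, Multiset.map_bind, Multiset.sum_bind, Function.comp_def]

theorem hom_ext {M : Type*} [AddCommMonoid M] [Module ℚ M] {φ ψ : Span V E →ₗ[ℚ] M}
    (h : ∀ t, φ (bas t) = ψ (bas t)) : φ = ψ :=
  Finsupp.lhom_ext' fun c => LinearMap.ext_ring <| by induction c using Quot.ind; exact h _

theorem hom_ext₃ {M : Type*} [AddCommMonoid M] [Module ℚ M]
    {φ ψ : Span V E →ₗ[ℚ] Span V E →ₗ[ℚ] Span V E →ₗ[ℚ] M}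
    (h : ∀ s t u, φ (bas s) (bas t) (bas u) = ψ (bas s) (bas t) (bas u)) : φ = ψ :=
  hom_ext fun s => hom_ext fun t => hom_ext fun u => h s t u

end Span

section Products

open Span

variable {V E Ω : Type} {act : Ω → V → V}
  {g : E × Ω → Span V E →ₗ[ℚ] Span V E →ₗ[ℚ] Span V E}

theorem apply_bas_bas
    (hg : ∀ a ω σ τ, g (a, ω) (bas σ) (bas τ) = ofList (graftMT act a ω σ τ))
    (p : E × Ω) (σ τ : RT V E) :
    g p (bas σ) (bas τ) = ofMultiset (grafts act p σ τ) :=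
  (hg p.1 p.2 σ τ).trans (ofList_eq_ofMultiset _)

theorem apply_bas_ofMultiset
    (hg : ∀ a ω σ τ, g (a, ω) (bas σ) (bas τ) = ofList (graftMT act a ω σ τ))
    (p : E × Ω) (σ : RT V E) (m : Multiset (RT V E)) :
    g p (bas σ) (ofMultiset m) = ofMultiset (m.bind (grafts act p σ)) := by
  simp only [map_ofMultiset, ofMultiset_bind, Function.comp_def, apply_bas_bas hg]

theorem apply_ofMultiset_bas
    (hg : ∀ a ω σ τ, g (a, ω) (bas σ) (bas τ) = ofList (graftMT act a ω σ τ))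
    (p : E × Ω) (m : Multiset (RT V E)) (υ : RT V E) :
    g p (ofMultiset m) (bas υ) = ofMultiset (m.bind (grafts act p · υ)) := by
  simpa only [LinearMap.flip_apply, Function.comp_def, ofMultiset_bind, apply_bas_bas hg]
    using map_ofMultiset ((g p).flip (bas υ)) m

theorem add_preLie_bas
    (hg : ∀ a ω σ τ, g (a, ω) (bas σ) (bas τ) = ofList (graftMT act a ω σ τ))
    {p q : E × Ω} (hc : Function.Commute (act p.2) (act q.2))
    (σ τ υ : RT V E) :
    g p (bas σ) (g q (bas τ) (bas υ)) + g p (g q (bas τ) (bas σ)) (bas υ)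
      = g q (bas τ) (g p (bas σ) (bas υ)) + g q (g p (bas σ) (bas τ)) (bas υ) := by
  simp only [apply_bas_bas hg, apply_bas_ofMultiset hg, apply_ofMultiset_bas hg,
    ← ofMultiset_add]
  exact ofMultiset_congr (map_qt_preLieTerms_comm hc σ τ υ)

end Products

/-- **The products `▷^{a,ω}` form an `(E × Ω)`-multi-pre-Lie structure.**  Let `Ω` be a
commutative monoid acting on the vertex decoration set `V` and let
`σ ▷^{a,ω} τ := Σ_{v∈N_τ} ↑_v^ω (σ ▷ᵃ_v τ)` (graft at `v` with an `a`-edge and multiply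
the decoration of `v` by `ω`).  Then the bilinear extensions `g (a, ω)` of these products
to the span of decorated rooted trees satisfy the `(E × Ω)`-multi-pre-Lie identity. -/
theorem graftAction_multiPreLie {V E Ω : Type} [CommMonoid Ω] [MulAction Ω V]
    (g : E × Ω → Span V E →ₗ[ℚ] Span V E →ₗ[ℚ] Span V E)
    (hg : ∀ (a : E) (ω : Ω) (σ τ : RT V E),
      g (a, ω) (bas σ) (bas τ) = ofList (graftMT (fun ω v => ω • v) a ω σ τ)) :
    ∀ (p q : E × Ω) (x y z : Span V E),
      g p x (g q y z) - g q (g p x y) z = g q y (g p x z) - g p (g q y x) z := by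
  intro p q x y z
  have key : (g p).associator (g q) = ((g q).associator (g p)).flip :=
    Span.hom_ext₃ fun σ τ υ => by
      simpa [sub_eq_sub_iff_add_eq_add] using
        add_preLie_bas hg (smul_comm p.2 q.2) σ τ υ
  simpa using LinearMap.congr_fun (LinearMap.congr_fun₂ key x y) z
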